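/- arXiv:2409.04887 — 3 statements merged into one kernel-verified Lean document; each statement's English description precedes it below -/
import Mathlib

section
/- The rule (Loop) is valid on all conceptual cumulative ordered models: if 𝓜 is a conceptual cumulative model whose relation ≺ is a strict partial order, and φ₀ |~_𝓜 φ₁, φ₁ |~_𝓜 φ₂, …, φ_{n-1} |~_𝓜 φ_n and φ_n |~_𝓜 φ₀, then φ₀ |~_𝓜 φ_n. -/
namespace DR

/-- Formulas of the lattice-based language 𝓛: variables, ⊥, ⊤, ∧, ∨. -/
inductive Fm : Type where
  | var : ℕ → Fm
  | bot : Fm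
  | top : Fm
  | and : Fm → Fm → Fm
  | or  : Fm → Fm → Fm

/-- A polarity (formal context) (A, X, I). -/
structure Polarity : Type 1 where
  Obj : Type
  Feat : Type
  I : Obj → Feat → Prop

namespace Polarity

variable (P : Polarity)

def up (B : Set P.Obj) : Set P.Feat := {x | ∀ b ∈ B, P.I b x}
def dn (Y : Set P.Feat) : Set P.Obj := {a | ∀ y ∈ Y, P.I a y}

lemma subset_dn_up (B : Set P.Obj) : B ⊆ P.dn (P.up B) :=
  fun _ ha _ hx => hx _ ha

lemma subset_up_dn (Y : Set P.Feat) : Y ⊆ P.up (P.dn Y) :=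
  fun _ hx _ ha => ha _ hx

lemma up_anti {B C : Set P.Obj} (h : B ⊆ C) : P.up C ⊆ P.up B :=
  fun _ hx b hb => hx b (h hb)

lemma dn_anti {Y Z : Set P.Feat} (h : Y ⊆ Z) : P.dn Z ⊆ P.dn Y :=
  fun _ ha y hy => ha y (h hy)

end Polarity

/-- A formal concept of a polarity: a Galois-stable pair (extension, intension). -/
structure Concept (P : Polarity) : Type where
  ext : Set P.Obj
  int : Set P.Feat
  up_ext : P.up ext = int
  dn_int : P.dn int = ext

namespace Concept

variable {P : Polarity}

/-- Lattice meet of concepts: extensions intersect. -/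
def meet (c d : Concept P) : Concept P where
  ext := c.ext ∩ d.ext
  int := P.up (c.ext ∩ d.ext)
  up_ext := rfl
  dn_int := by
    apply Set.Subset.antisymm
    · intro a ha
      constructor
      · rw [← c.dn_int]
        intro y hy
        apply ha
        rw [← c.up_ext] at hy
        exact P.up_anti Set.inter_subset_left hy
      · rw [← d.dn_int]
        intro y hy
        apply ha
        rw [← d.up_ext] at hy
        exact P.up_anti Set.inter_subset_right hy
    · exact P.subset_dn_up _

/-- Lattice join of concepts: intensions intersect. -/
def join (c d : Concept P) : Concept P where
  ext := P.dn (c.int ∩ d.int)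
  int := c.int ∩ d.int
  up_ext := by
    apply Set.Subset.antisymm
    · intro x hx
      constructor
      · rw [← c.up_ext]
        intro b hb
        apply hx
        rw [← c.dn_int] at hb
        exact P.dn_anti Set.inter_subset_left hb
      · rw [← d.up_ext]
        intro b hb
        apply hx
        rw [← d.dn_int] at hb
        exact P.dn_anti Set.inter_subset_right hb
    · exact P.subset_up_dn _
  dn_int := rfl

/-- The greatest concept. -/
def top (P : Polarity) : Concept P where
  ext := Set.univ
  int := P.up Set.univ
  up_ext := rfl
  dn_int := Set.eq_univ_of_univ_subset (P.subset_dn_up _)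

/-- The least concept. -/
def bot (P : Polarity) : Concept P where
  ext := P.dn Set.univ
  int := Set.univ
  up_ext := Set.eq_univ_of_univ_subset (P.subset_up_dn _)
  dn_int := rfl

end Concept

/-- A polarity-based model: a polarity with a valuation of variables into concepts. -/
structure Model : Type 1 where
  P : Polarity
  V : ℕ → Concept P

namespace Model

/-- Homomorphic extension of the valuation to all formulas. -/
def interp (M : Model) : Fm → Concept M.P
  | .var n => M.V n
  | .bot => Concept.bot M.P
  | .top => Concept.top M.P
  | .and φ ψ => Concept.meet (M.interp φ) (M.interp ψ)
  | .or φ ψ => Concept.join (M.interp φ) (M.interp ψ)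

/-- M, a ⊩ φ : the object a is in the extension of φ. -/
def objSat (M : Model) (a : M.P.Obj) (φ : Fm) : Prop := a ∈ (M.interp φ).ext

/-- M, x ≻ φ : the feature x is in the intension of φ. -/
def featSat (M : Model) (x : M.P.Feat) (φ : Fm) : Prop := x ∈ (M.interp φ).int

end Model

/-- Validity of the sequent φ ⊢ ψ: in every polarity-based model the
extension of φ is contained in the extension of ψ. -/
def SeqValid (φ ψ : Fm) : Prop :=
  ∀ M : Model, (M.interp φ).ext ⊆ (M.interp ψ).ext

/-- A conceptual cumulative consequence relation: reflexive and closed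
under (LLE), (RW), (CM) and (Cut). -/
structure IsCumulative (R : Fm → Fm → Prop) : Prop where
  refl : ∀ φ, R φ φ
  lle : ∀ φ ψ χ, SeqValid φ ψ → SeqValid ψ φ → R φ χ → R ψ χ
  rw : ∀ φ ψ χ, SeqValid φ ψ → R χ φ → R χ ψ
  cm : ∀ φ ψ χ, R φ ψ → R φ χ → R (Fm.and φ ψ) χ
  cut : ∀ φ ψ χ, R (Fm.and φ ψ) χ → R φ ψ → R φ χ

/-- Closure under the rule (Loop). -/
def LoopClosed (R : Fm → Fm → Prop) : Prop :=
  ∀ (n : ℕ) (φ : ℕ → Fm),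
    (∀ i < n, R (φ i) (φ (i + 1))) → R (φ n) (φ 0) → R (φ 0) (φ n)

/-- A pointed polarity-based model. -/
structure PointedModel : Type 1 where
  M : Model
  pt : M.P.Obj

/-- Satisfaction at a pointed model. -/
def PointedModel.sat (Ma : PointedModel) (φ : Fm) : Prop := Ma.M.objSat Ma.pt φ

/-- A pointed model is normal for φ iff it satisfies every plausible consequence of φ. -/
def NormalFor (R : Fm → Fm → Prop) (Ma : PointedModel) (φ : Fm) : Prop :=
  ∀ ψ, R φ ψ → Ma.sat ψ

/-- A pointed model is supernormal for φ. -/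
def SupernormalFor (R : Fm → Fm → Prop) (Ma : PointedModel) (φ : Fm) : Prop :=
  ∀ ψ, R φ ψ ↔ Ma.sat ψ

/-- A frame (S, l, ≺): states labelled by sets of pointed polarity-based
models with a preference relation. -/
structure Frame : Type 2 where
  S : Type
  l : S → Set PointedModel
  prec : S → S → Prop

/-- t is minimal in P (w.r.t. prec). -/
def MinimalIn {α : Type _} (prec : α → α → Prop) (P : Set α) (t : α) : Prop :=
  t ∈ P ∧ ∀ s ∈ P, ¬ prec s t

/-- t is a minimum of P (w.r.t. prec). -/
def IsMinimum {α : Type _} (prec : α → α → Prop) (P : Set α) (t : α) : Prop :=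
  t ∈ P ∧ ∀ s ∈ P, s ≠ t → prec t s

/-- P is smooth (w.r.t. prec). -/
def Smooth {α : Type _} (prec : α → α → Prop) (P : Set α) : Prop :=
  ∀ t ∈ P, MinimalIn prec P t ∨ ∃ s, MinimalIn prec P s ∧ prec s t

namespace Frame

/-- s ⊨ φ : every pointed model in l(s) satisfies φ. -/
def stateSat (F : Frame) (s : F.S) (φ : Fm) : Prop :=
  ∀ Ma ∈ F.l s, Ma.sat φ

/-- φ̂ : the set of states satisfying φ. -/
def hat (F : Frame) (φ : Fm) : Set F.S := {s | F.stateSat s φ}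

/-- A conceptual cumulative model: φ̂ is smooth for every φ. -/
def IsCumulativeModel (F : Frame) : Prop :=
  ∀ φ : Fm, Smooth F.prec (F.hat φ)

/-- The consequence relation |~_𝓜 defined by a frame: every state minimal
in φ̂ belongs to ψ̂. -/
def conseq (F : Frame) (φ ψ : Fm) : Prop :=
  ∀ s, MinimalIn F.prec (F.hat φ) s → s ∈ F.hat ψ

/-- Replace the preference relation of a frame. -/
def withPrec (F : Frame) (p : F.S → F.S → Prop) : Frame := ⟨F.S, F.l, p⟩

end Frame

/-- The equivalence class φ/∼ of φ under ∼ (φ ∼ ψ iff φ |~ ψ and ψ |~ φ). -/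
def cls (R : Fm → Fm → Prop) (φ : Fm) : Set Fm := {ψ | R φ ψ ∧ R ψ φ}

/-- φ/∼ ≤ ψ/∼ : there is χ ∈ φ/∼ with ψ |~ χ (ψ any representative of ψ/∼). -/
def clsLE (R : Fm → Fm → Prop) (C D : Set Fm) : Prop :=
  ∃ χ ∈ C, ∃ ψ ∈ D, R ψ χ

/-- The canonical model of a consequence relation: states are the
equivalence classes φ/∼, labelled by the normal pointed models for φ,
with φ/∼ ≺ ψ/∼ iff φ/∼ ≤ ψ/∼ and φ/∼ ≠ ψ/∼. -/
def canonicalFrame (R : Fm → Fm → Prop) : Frame where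
  S := {C : Set Fm // ∃ φ, C = cls R φ}
  l := fun s => {Ma | ∃ φ, s.val = cls R φ ∧ NormalFor R Ma φ}
  prec := fun s t => clsLE R s.val t.val ∧ s ≠ t

/-- The state φ/∼ of the canonical model. -/
def canonicalState (R : Fm → Fm → Prop) (φ : Fm) : (canonicalFrame R).S :=
  ⟨cls R φ, φ, rfl⟩


/-- the rule (Loop) is valid on all conceptual cumulative
ordered models. -/
theorem loop_valid_on_ordered_models (F : Frame) (h : F.IsCumulativeModel)
    (hirr : Irreflexive F.prec) (htrans : Transitive F.prec)
    (n : ℕ) (φ : ℕ → Fm)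
    (hchain : ∀ i < n, F.conseq (φ i) (φ (i + 1)))
    (hloop : F.conseq (φ n) (φ 0)) :
    F.conseq (φ 0) (φ n) := by
  intro t ht
  have key : ∀ i ≤ n, ∃ u, MinimalIn F.prec (F.hat (φ i)) u ∧ (u = t ∨ F.prec u t) := by
    intro i hi
    induction i with
    | zero => exact ⟨t, ht, Or.inl rfl⟩
    | succ k ihk =>
      obtain ⟨u, hu, hut⟩ := ihk (Nat.le_of_succ_le hi)
      have hmem : u ∈ F.hat (φ (k+1)) := hchain k (Nat.lt_of_succ_le hi) u hu
      rcases h (φ (k+1)) u hmem with hm | ⟨v, hv, hvu⟩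
      · exact ⟨u, hm, hut⟩
      · refine ⟨v, hv, Or.inr ?_⟩
        rcases hut with rfl | h'
        · exact hvu
        · exact htrans hvu h'
  obtain ⟨u, hu, hut⟩ := key n le_rfl
  have hu0 : u ∈ F.hat (φ 0) := hloop u hu
  rcases hut with rfl | h'
  · exact hu.1
  · exact absurd h' (ht.2 u hu0)

end DR
end

section
/- Let |~ be a loop-cumulative consequence relation and 𝓜 = (S,l,≺) its canonical model. Then the transitive closure ≺⁺ of ≺ is irreflexive, hence a strict partial order, so (S,l,≺⁺) is a conceptual cumulative ordered model. -/
namespace DR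

/-!
Walking back along a `≺`-path `u ≺ ⋯ ≺ s` from a representative `φ` of `s`, and choosing
representatives along the way, gives a chain `φ |~ ⋯ |~ γ` ending in a representative `γ` of `u`.
If `s ≺ u` closes a cycle, then also `γ |~ φ`, so (Loop) yields `φ |~ γ`, i.e. `u = s`,
contradicting `s ≠ u`. Thus `≺⁺` is a strict partial order. By the truth lemma
`ψ/∼ ⊨ φ ↔ ψ |~ φ`, proved with a supernormal pointed model, `φ/∼` lies in `φ̂` and `≺`-precedes
every other state of `φ̂`; a least element for a strict partial order is minimal, so `φ̂` is smooth.
-/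

open Relation

variable {R : Fm → Fm → Prop}

lemma Concept.eq_of_ext_eq {P : Polarity} {c d : Concept P} (he : c.ext = d.ext) : c = d := by
  revert he
  obtain ⟨_, _, rfl, -⟩ := c
  obtain ⟨_, _, rfl, -⟩ := d
  rintro rfl
  rfl

lemma Concept.eq_of_int_eq {P : Polarity} {c d : Concept P} (hi : c.int = d.int) : c = d := by
  revert hi
  obtain ⟨_, _, -, rfl⟩ := c
  obtain ⟨_, _, -, rfl⟩ := d
  rintro rfl
  rfl

lemma Concept.int_subset_int {P : Polarity} {c d : Concept P} (h : c.ext ⊆ d.ext) :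
    d.int ⊆ c.int := by
  rw [← c.up_ext, ← d.up_ext]
  exact P.up_anti h

lemma Concept.mem_ext_iff {P : Polarity} (c : Concept P) (a : P.Obj) :
    a ∈ c.ext ↔ ∀ y ∈ c.int, P.I a y := by
  rw [← c.dn_int]
  rfl

lemma seqValid_refl (φ : Fm) : SeqValid φ φ := fun _ => subset_rfl

lemma SeqValid.trans {φ ψ χ : Fm} (h₁ : SeqValid φ ψ) (h₂ : SeqValid ψ χ) : SeqValid φ χ :=
  fun M => (h₁ M).trans (h₂ M)

lemma seqValid_and_left (φ ψ : Fm) : SeqValid (.and φ ψ) φ := fun _ _ ha => ha.1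

lemma seqValid_and_right (φ ψ : Fm) : SeqValid (.and φ ψ) ψ := fun _ _ ha => ha.2

lemma SeqValid.and {φ α β : Fm} (h₁ : SeqValid φ α) (h₂ : SeqValid φ β) :
    SeqValid φ (.and α β) :=
  fun M _ ha => ⟨h₁ M ha, h₂ M ha⟩

lemma seqValid_and_comm (φ ψ : Fm) : SeqValid (.and φ ψ) (.and ψ φ) :=
  (seqValid_and_right φ ψ).and (seqValid_and_left φ ψ)

lemma seqValid_top (φ : Fm) : SeqValid φ .top := fun _ _ _ => trivial

lemma seqValid_bot (φ : Fm) : SeqValid .bot φ :=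
  fun M a ha => ((M.interp φ).mem_ext_iff a).2 fun y _ => ha y trivial

lemma seqValid_or_left (φ ψ : Fm) : SeqValid φ (.or φ ψ) :=
  fun M a ha y hy => ((M.interp φ).mem_ext_iff a).1 ha y hy.1

lemma seqValid_or_right (φ ψ : Fm) : SeqValid ψ (.or φ ψ) :=
  fun M a ha y hy => ((M.interp ψ).mem_ext_iff a).1 ha y hy.2

lemma SeqValid.or {φ ψ χ : Fm} (h₁ : SeqValid φ χ) (h₂ : SeqValid ψ χ) :
    SeqValid (.or φ ψ) χ :=
  fun M a ha => ((M.interp χ).mem_ext_iff a).2 fun y hy =>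
    ha y ⟨Concept.int_subset_int (h₁ M) hy, Concept.int_subset_int (h₂ M) hy⟩

namespace IsCumulative

lemma rel_and (h : IsCumulative R) {φ α β : Fm} (h₁ : R φ α) (h₂ : R φ β) :
    R φ (.and α β) := by
  have hαβ : R (.and φ α) β := h.cm φ α β h₁ h₂
  have hproj : R (.and (.and φ α) β) (.and α β) :=
    h.rw _ _ _ (((seqValid_and_left _ _).trans (seqValid_and_right _ _)).and
      (seqValid_and_right _ _)) (h.refl _)
  exact h.cut φ α _ (h.cut _ β _ hproj hαβ) h₁

lemma reciprocity (h : IsCumulative R) {φ ψ χ : Fm} (h₁ : R φ ψ) (h₂ : R ψ φ) (h₃ : R φ χ) :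
    R ψ χ := by
  have hcm : R (.and ψ φ) χ :=
    h.lle _ _ _ (seqValid_and_comm φ ψ) (seqValid_and_comm ψ φ) (h.cm φ ψ χ h₁ h₃)
  exact h.cut ψ φ χ hcm h₂

lemma cls_eq_iff (h : IsCumulative R) {φ ψ : Fm} : cls R φ = cls R ψ ↔ R φ ψ ∧ R ψ φ := by
  refine ⟨fun he => show ψ ∈ cls R φ from he ▸ ⟨h.refl ψ, h.refl ψ⟩, fun ⟨h₁, h₂⟩ => ?_⟩
  ext χ
  exact ⟨fun ⟨a, b⟩ => ⟨h.reciprocity h₁ h₂ a, h.reciprocity a b h₁⟩,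
    fun ⟨a, b⟩ => ⟨h.reciprocity h₂ h₁ a, h.reciprocity a b h₂⟩⟩

end IsCumulative

lemma _root_.Relation.ReflTransGen.exists_seq {α : Type*} {r : α → α → Prop} {a b : α}
    (hab : ReflTransGen r a b) :
    ∃ n, ∃ f : ℕ → α, f 0 = a ∧ f n = b ∧ ∀ i < n, r (f i) (f (i + 1)) := by
  induction hab using ReflTransGen.head_induction_on with
  | refl => exact ⟨0, fun _ => b, rfl, rfl, fun _ hi => absurd hi (Nat.not_lt_zero _)⟩
  | @head c d hcd _ ih =>
    obtain ⟨n, f, rfl, hfn, hf⟩ := ih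
    refine ⟨n + 1, fun i => Nat.casesOn i c f, rfl, hfn, fun i hi => ?_⟩
    cases i with
    | zero => exact hcd
    | succ i => exact hf i (by omega)

lemma LoopClosed.rel_of_reflTransGen (hl : LoopClosed R) {a b : Fm} (hab : ReflTransGen R a b)
    (hba : R b a) : R a b := by
  obtain ⟨n, f, rfl, rfl, hf⟩ := hab.exists_seq
  exact hl n f hf hba

/-- The point `none` carries exactly the `|~`-consequences of `ψ`; the objects `some φ` make the
intension of every formula principal, which is what the `∨` case of `charModel_interp` needs. -/
def charPolarity (R : Fm → Fm → Prop) (ψ : Fm) : Polarity where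
  Obj := Option Fm
  Feat := Fm
  I o χ := match o with
    | some φ => SeqValid φ χ
    | none => R ψ χ

lemma charPolarity_I_of_seqValid (h : IsCumulative R) {ψ χ δ : Fm} {o : Option Fm}
    (ho : (charPolarity R ψ).I o χ) (hχδ : SeqValid χ δ) : (charPolarity R ψ).I o δ :=
  match o with
  | some _ => SeqValid.trans ho hχδ
  | none => h.rw _ _ _ hχδ ho

def charConcept (h : IsCumulative R) (ψ χ : Fm) : Concept (charPolarity R ψ) where
  ext := {o | (charPolarity R ψ).I o χ}
  int := {δ | SeqValid χ δ}
  up_ext := Set.ext fun _ =>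
    ⟨fun hδ => hδ (some χ) (seqValid_refl χ), fun hδ _ ho => charPolarity_I_of_seqValid h ho hδ⟩
  dn_int := Set.ext fun _ =>
    ⟨fun ho => ho χ (seqValid_refl χ), fun ho _ hδ => charPolarity_I_of_seqValid h ho hδ⟩

def charModel (h : IsCumulative R) (ψ : Fm) : Model where
  P := charPolarity R ψ
  V n := charConcept h ψ (.var n)

lemma charModel_interp (h : IsCumulative R) (ψ χ : Fm) :
    (charModel h ψ).interp χ = charConcept h ψ χ := by
  induction χ with
  | var n => rfl
  | bot =>
    refine Concept.eq_of_int_eq (Set.ext fun δ => ?_)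
    exact ⟨fun _ => seqValid_bot δ, fun _ => trivial⟩
  | top =>
    refine Concept.eq_of_ext_eq (Set.ext fun o => ⟨fun _ => ?_, fun _ => trivial⟩)
    match o with
    | some φ => exact seqValid_top φ
    | none => exact h.rw _ _ _ (seqValid_top ψ) (h.refl ψ)
  | and α β ihα ihβ =>
    refine Concept.eq_of_ext_eq ?_
    change ((charModel h ψ).interp α).ext ∩ ((charModel h ψ).interp β).ext = _
    rw [ihα, ihβ]
    refine Set.ext fun o => ⟨fun ⟨hα, hβ⟩ => ?_, fun ho => ⟨?_, ?_⟩⟩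
    · match o with
      | some φ => exact SeqValid.and hα hβ
      | none => exact h.rel_and hα hβ
    · exact charPolarity_I_of_seqValid h ho (seqValid_and_left α β)
    · exact charPolarity_I_of_seqValid h ho (seqValid_and_right α β)
  | or α β ihα ihβ =>
    refine Concept.eq_of_int_eq ?_
    change ((charModel h ψ).interp α).int ∩ ((charModel h ψ).interp β).int = _
    rw [ihα, ihβ]
    exact Set.ext fun δ => ⟨fun ⟨hα, hβ⟩ => SeqValid.or hα hβ,
      fun hδ => ⟨(seqValid_or_left α β).trans hδ, (seqValid_or_right α β).trans hδ⟩⟩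

lemma exists_supernormalFor (h : IsCumulative R) (ψ : Fm) : ∃ Ma, SupernormalFor R Ma ψ := by
  refine ⟨⟨charModel h ψ, (none : Option Fm)⟩, fun χ => ?_⟩
  rw [PointedModel.sat, Model.objSat, charModel_interp]
  rfl

lemma canonicalState_surjective : Function.Surjective (canonicalState R) := by
  rintro ⟨_, φ, rfl⟩
  exact ⟨φ, rfl⟩

lemma canonicalState_eq_iff (h : IsCumulative R) {φ ψ : Fm} :
    canonicalState R φ = canonicalState R ψ ↔ R φ ψ ∧ R ψ φ :=
  Subtype.ext_iff.trans h.cls_eq_iff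

lemma stateSat_canonicalState_iff (h : IsCumulative R) {ψ φ : Fm} :
    (canonicalFrame R).stateSat (canonicalState R ψ) φ ↔ R ψ φ := by
  constructor
  · intro hsat
    obtain ⟨Ma, hMa⟩ := exists_supernormalFor h ψ
    exact (hMa φ).2 (hsat Ma ⟨ψ, rfl, fun χ hχ => (hMa χ).1 hχ⟩)
  · rintro hψφ Ma ⟨χ, hψχ, hMa⟩
    obtain ⟨h₁, h₂⟩ := h.cls_eq_iff.1 hψχ
    exact hMa φ (h.reciprocity h₁ h₂ hψφ)

lemma exists_rel_of_canonicalFrame_prec (h : IsCumulative R) {s : (canonicalFrame R).S}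
    {ψ : Fm} (hs : (canonicalFrame R).prec s (canonicalState R ψ)) :
    ∃ χ, s = canonicalState R χ ∧ R ψ χ := by
  obtain ⟨φ, rfl⟩ := canonicalState_surjective s
  obtain ⟨⟨χ, hχ, ψ', ⟨hψψ', hψ'ψ⟩, hψ'χ⟩, -⟩ := hs
  exact ⟨χ, (canonicalState_eq_iff h).2 hχ, h.reciprocity hψ'ψ hψψ' hψ'χ⟩

lemma canonicalFrame_prec_of_rel (h : IsCumulative R) {φ ψ : Fm} (hψφ : R ψ φ)
    (hne : canonicalState R φ ≠ canonicalState R ψ) :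
    (canonicalFrame R).prec (canonicalState R φ) (canonicalState R ψ) :=
  ⟨⟨φ, ⟨h.refl φ, h.refl φ⟩, ψ, ⟨h.refl ψ, h.refl ψ⟩, hψφ⟩, hne⟩

lemma exists_reflTransGen_of_canonicalFrame_reflTransGen (h : IsCumulative R)
    {s : (canonicalFrame R).S} {ψ : Fm}
    (hs : ReflTransGen (canonicalFrame R).prec s (canonicalState R ψ)) :
    ∃ χ, s = canonicalState R χ ∧ ReflTransGen R ψ χ := by
  induction hs using ReflTransGen.head_induction_on with
  | refl => exact ⟨ψ, rfl, .refl⟩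
  | head hst _ ih =>
    obtain ⟨χ, rfl, hψχ⟩ := ih
    obtain ⟨χ', rfl, hχχ'⟩ := exists_rel_of_canonicalFrame_prec h hst
    exact ⟨χ', rfl, hψχ.tail hχχ'⟩

lemma canonicalState_eq_of_reflTransGen (h : IsCumulative R) (hl : LoopClosed R) {φ ψ : Fm}
    (hψφ : R ψ φ)
    (hs : ReflTransGen (canonicalFrame R).prec (canonicalState R ψ) (canonicalState R φ)) :
    canonicalState R ψ = canonicalState R φ := by
  obtain ⟨χ, hψχ, hφχ⟩ := exists_reflTransGen_of_canonicalFrame_reflTransGen h hs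
  obtain ⟨h₁, h₂⟩ := (canonicalState_eq_iff h).1 hψχ
  have hχφ : R χ φ := h.reciprocity h₁ h₂ hψφ
  rw [hψχ, (canonicalState_eq_iff h).2 ⟨hχφ, hl.rel_of_reflTransGen hφχ hχφ⟩]

lemma canonicalFrame_transGen_irrefl (h : IsCumulative R) (hl : LoopClosed R)
    (s : (canonicalFrame R).S) : ¬ TransGen (canonicalFrame R).prec s s := by
  intro hs
  obtain ⟨u, hsu, hus⟩ := TransGen.head'_iff.1 hs
  obtain ⟨ψ, rfl⟩ := canonicalState_surjective u
  obtain ⟨φ, rfl, hψφ⟩ := exists_rel_of_canonicalFrame_prec h hsu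
  exact hsu.2 (canonicalState_eq_of_reflTransGen h hl hψφ hus).symm

lemma isMinimum_hat_canonicalState (h : IsCumulative R) (φ : Fm) :
    IsMinimum (TransGen (canonicalFrame R).prec) ((canonicalFrame R).hat φ)
      (canonicalState R φ) := by
  refine ⟨(stateSat_canonicalState_iff h).2 (h.refl φ), fun t ht hne => ?_⟩
  obtain ⟨ψ, rfl⟩ := canonicalState_surjective t
  exact .single (canonicalFrame_prec_of_rel h ((stateSat_canonicalState_iff h).1 ht) hne.symm)

section StrictOrder

variable {α : Type*} {r : α → α → Prop} {P : Set α} {m : α}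

lemma IsMinimum.minimalIn (hirr : ∀ a, ¬ r a a) (htrans : ∀ {a b c}, r a b → r b c → r a c)
    (hm : IsMinimum r P m) : MinimalIn r P m := by
  refine ⟨hm.1, fun s hs hsm => ?_⟩
  by_cases hsm' : s = m
  · exact hirr m (hsm' ▸ hsm)
  · exact hirr m (htrans (hm.2 s hs hsm') hsm)

lemma IsMinimum.smooth (hirr : ∀ a, ¬ r a a) (htrans : ∀ {a b c}, r a b → r b c → r a c)
    (hm : IsMinimum r P m) : Smooth r P := by
  intro t ht
  by_cases htm : t = m
  · exact .inl (htm ▸ hm.minimalIn hirr htrans)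
  · exact .inr ⟨m, hm.minimalIn hirr htrans, hm.2 t ht htm⟩

end StrictOrder

/-- for a loop-cumulative relation, the transitive closure
of the canonical preference relation is irreflexive, hence a strict
partial order, and (S,l,≺⁺) is a conceptual cumulative ordered model. -/
theorem canonical_transitive_closure_ordered (R : Fm → Fm → Prop)
    (h : IsCumulative R) (hl : LoopClosed R) :
    Irreflexive (Relation.TransGen (canonicalFrame R).prec) ∧
    Transitive (Relation.TransGen (canonicalFrame R).prec) ∧
    ((canonicalFrame R).withPrec
      (Relation.TransGen (canonicalFrame R).prec)).IsCumulativeModel := by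
  have hirr := canonicalFrame_transGen_irrefl h hl
  have htrans : ∀ {a b c}, TransGen (canonicalFrame R).prec a b →
      TransGen (canonicalFrame R).prec b c → TransGen (canonicalFrame R).prec a c :=
    TransGen.trans
  exact ⟨hirr, fun _ _ _ => htrans, fun φ => (isMinimum_hat_canonicalState h φ).smooth hirr htrans⟩

end DR
end

section
/- Existence of supernormal models: let |~ be a conceptual cumulative consequence relation. For every 𝓛-formula φ there exists a pointed polarity-based model M_a that is supernormal for φ, i.e., for all ψ ∈ 𝓛, φ |~ ψ if and only if M_a ⊩ ψ. -/
namespace DR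

/-! ### Auxiliary development for the supernormal model theorem -/

section Supernormal

/-- Semantic facts about `SeqValid`. -/
lemma seq_refl (θ : Fm) : SeqValid θ θ := fun _ => subset_rfl

lemma seq_trans {a b c : Fm} (h1 : SeqValid a b) (h2 : SeqValid b c) :
    SeqValid a c := fun M => (h1 M).trans (h2 M)

lemma seq_top (θ : Fm) : SeqValid θ Fm.top := fun _ _ _ => trivial

lemma seq_bot (θ : Fm) : SeqValid Fm.bot θ := by
  intro M a ha
  have ha' : a ∈ M.P.dn Set.univ := ha
  rw [← (M.interp θ).dn_int]
  exact fun y _ => ha' y trivial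

lemma seq_and_left (a b : Fm) : SeqValid (Fm.and a b) a :=
  fun _ => Set.inter_subset_left

lemma seq_and_right (a b : Fm) : SeqValid (Fm.and a b) b :=
  fun _ => Set.inter_subset_right

lemma seq_and_intro {θ a b : Fm} (h1 : SeqValid θ a) (h2 : SeqValid θ b) :
    SeqValid θ (Fm.and a b) :=
  fun M => Set.subset_inter (h1 M) (h2 M)

lemma seq_or_left (a b : Fm) : SeqValid a (Fm.or a b) := by
  intro M x hx
  rw [← (M.interp a).dn_int] at hx
  exact M.P.dn_anti Set.inter_subset_left hx

lemma seq_or_right (a b : Fm) : SeqValid b (Fm.or a b) := by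
  intro M x hx
  rw [← (M.interp b).dn_int] at hx
  exact M.P.dn_anti Set.inter_subset_right hx

lemma seq_or_elim {a b θ : Fm} (h1 : SeqValid a θ) (h2 : SeqValid b θ) :
    SeqValid (Fm.or a b) θ := by
  intro M
  have hia : (M.interp θ).int ⊆ (M.interp a).int := by
    rw [← (M.interp θ).up_ext, ← (M.interp a).up_ext]
    exact M.P.up_anti (h1 M)
  have hib : (M.interp θ).int ⊆ (M.interp b).int := by
    rw [← (M.interp θ).up_ext, ← (M.interp b).up_ext]
    exact M.P.up_anti (h2 M)
  have : ((M.interp a).int ∩ (M.interp b).int : Set M.P.Feat) ⊇ (M.interp θ).int :=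
    Set.subset_inter hia hib
  calc (M.interp (Fm.or a b)).ext
      = M.P.dn ((M.interp a).int ∩ (M.interp b).int) := rfl
    _ ⊆ M.P.dn (M.interp θ).int := M.P.dn_anti this
    _ = (M.interp θ).ext := (M.interp θ).dn_int

/-- Derived rule (And): from `R α β` and `R α γ` infer `R α (β ∧ γ)`. -/
lemma r_and {R : Fm → Fm → Prop} (h : IsCumulative R) {α β γ : Fm}
    (h1 : R α β) (h2 : R α γ) : R α (Fm.and β γ) := by
  have c1 : R (Fm.and α γ) β := h.cm α γ β h2 h1
  have hv : SeqValid (Fm.and (Fm.and α γ) β) (Fm.and β γ) :=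
    seq_and_intro (seq_and_right _ _)
      (seq_trans (seq_and_left _ _) (seq_and_right _ _))
  have c2 : R (Fm.and (Fm.and α γ) β) (Fm.and β γ) :=
    h.rw _ _ _ hv (h.refl _)
  have c3 : R (Fm.and α γ) (Fm.and β γ) := h.cut _ _ _ c2 c1
  exact h.cut _ _ _ c3 h2

variable (R : Fm → Fm → Prop) (φ : Fm)

/-- The canonical polarity for the theory `{ψ | R φ ψ}`: objects are
formulas together with one extra point, features are formulas. -/
def canonPolarity : Polarity where
  Obj := Option Fm
  Feat := Fm
  I := fun o χ => match o with
    | some θ => SeqValid θ χ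
    | none => R φ χ

/-- The intended extension of a formula in the canonical polarity. -/
def canonExt (ψ : Fm) : Set (canonPolarity R φ).Obj :=
  {o | match o with
    | some θ => SeqValid θ ψ
    | none => R φ ψ}

/-- The intended intension of a formula. -/
def canonInt (ψ : Fm) : Set (canonPolarity R φ).Feat := {χ | SeqValid ψ χ}

variable {R : Fm → Fm → Prop} {φ : Fm}

lemma canon_up_ext (h : IsCumulative R) (ψ : Fm) :
    (canonPolarity R φ).up (canonExt R φ ψ) = canonInt R φ ψ := by
  ext χ
  constructor
  · intro hx
    exact hx (some ψ) (seq_refl ψ)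
  · intro hχ o ho
    match o with
    | some θ => exact seq_trans ho hχ
    | none => exact h.rw _ _ _ hχ ho

lemma canon_dn_int (h : IsCumulative R) (ψ : Fm) :
    (canonPolarity R φ).dn (canonInt R φ ψ) = canonExt R φ ψ := by
  ext o
  constructor
  · intro ho
    match o with
    | some θ => exact ho ψ (seq_refl ψ)
    | none => exact ho ψ (seq_refl ψ)
  · intro ho χ hχ
    match o with
    | some θ => exact seq_trans ho hχ
    | none => exact h.rw _ _ _ hχ ho

/-- The canonical concept of a formula. -/
def canonConcept (h : IsCumulative R) (φ : Fm) (ψ : Fm) : Concept (canonPolarity R φ) where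
  ext := canonExt R φ ψ
  int := canonInt R φ ψ
  up_ext := canon_up_ext h ψ
  dn_int := canon_dn_int h ψ

/-- The canonical model. -/
def canonModel (h : IsCumulative R) (φ : Fm) : Model where
  P := canonPolarity R φ
  V := fun n => canonConcept h φ (Fm.var n)

/-- Concepts are determined by their extensions. -/
lemma Concept.ext_inj {P : Polarity} {c d : Concept P} (hcd : c.ext = d.ext) :
    c = d := by
  obtain ⟨e, i, hu, hd⟩ := c
  obtain ⟨e', i', hu', hd'⟩ := d
  simp only at hcd
  subst hcd
  have : i = i' := hu.symm.trans hu'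
  subst this
  rfl

lemma canon_interp (h : IsCumulative R) (φ ψ : Fm) :
    (canonModel h φ).interp ψ = canonConcept h φ ψ := by
  induction ψ with
  | var n => rfl
  | bot =>
      apply Concept.ext_inj
      show (canonPolarity R φ).dn Set.univ = canonExt R φ Fm.bot
      ext o
      constructor
      · intro ho
        match o with
        | some θ => exact ho Fm.bot trivial
        | none => exact ho Fm.bot trivial
      · intro ho χ _
        match o with
        | some θ => exact seq_trans ho (seq_bot χ)
        | none => exact h.rw _ _ _ (seq_bot χ) ho
  | top =>
      apply Concept.ext_inj
      show (Set.univ : Set (canonPolarity R φ).Obj) = canonExt R φ Fm.top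
      ext o
      simp only [Set.mem_univ, true_iff]
      match o with
      | some θ => exact seq_top θ
      | none => exact h.rw _ _ _ (seq_top φ) (h.refl φ)
  | and a b iha ihb =>
      apply Concept.ext_inj
      show ((canonModel h φ).interp a).ext ∩ ((canonModel h φ).interp b).ext
          = canonExt R φ (Fm.and a b)
      rw [iha, ihb]
      ext o
      constructor
      · rintro ⟨ha, hb⟩
        match o with
        | some θ => exact seq_and_intro ha hb
        | none => exact r_and h ha hb
      · intro ho
        match o with
        | some θ =>
            exact ⟨seq_trans ho (seq_and_left a b), seq_trans ho (seq_and_right a b)⟩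
        | none =>
            exact ⟨h.rw _ _ _ (seq_and_left a b) ho, h.rw _ _ _ (seq_and_right a b) ho⟩
  | or a b iha ihb =>
      apply Concept.ext_inj
      show (canonPolarity R φ).dn
          ((((canonModel h φ).interp a).int ∩ ((canonModel h φ).interp b).int))
          = canonExt R φ (Fm.or a b)
      rw [iha, ihb]
      have hint : (canonConcept h φ a).int ∩ (canonConcept h φ b).int
          = canonInt R φ (Fm.or a b) := by
        ext χ
        constructor
        · rintro ⟨h1, h2⟩
          exact seq_or_elim h1 h2
        · intro hχ
          exact ⟨seq_trans (seq_or_left a b) hχ, seq_trans (seq_or_right a b) hχ⟩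
      rw [hint]
      exact canon_dn_int h (Fm.or a b)

end Supernormal

/-- existence of supernormal pointed polarity-based models. -/
theorem exists_supernormal (R : Fm → Fm → Prop) (h : IsCumulative R)
    (φ : Fm) :
    ∃ Ma : PointedModel, SupernormalFor R Ma φ := by
  refine ⟨⟨canonModel h φ, (none : Option Fm)⟩, fun ψ => ?_⟩
  show R φ ψ ↔ ((canonModel h φ).interp ψ).ext none
  rw [canon_interp h φ ψ]
  exact Iff.rfl

end DR
end
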